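/- The free group F₂ on two generators is residually finite. -/

import Mathlib

/-!
The free group `F` acts on itself by left multiplication. For `g ≠ 1`, let `S` be the finite set
of elements spelled by the suffixes of a word for `g`; it contains `1` and `g`. Each generator,
restricted to the points of `S` it keeps in `S`, is injective and so extends to a permutation of
`S`. By freeness these permutations define a homomorphism `F → Perm S`, and reading the word from
the right, the image of `g` carries `1` through the suffixes to `g`. Hence `g` is not in its
finite-index kernel.
-/

def ResiduallyFinite (G : Type*) [Group G] : Prop :=
  ∀ g : G, g ≠ 1 → ∃ H : Subgroup G, H.Normal ∧ H.FiniteIndex ∧ g ∉ H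

open Equiv

theorem Equiv.Perm.exists_perm_finset_apply_eq {X : Type*} (π : Perm X) (S : Finset X) :
    ∃ σ : Perm S, ∀ x : S, π x ∈ S → (σ x : X) = π x := by
  have hmaps : Set.MapsTo (fun x : S => π x) {x : S | π x ∈ S} S := fun _ hx => hx
  have hinj : Set.InjOn (fun x : S => π x) {x : S | π x ∈ S} :=
    fun _ _ _ _ h => Subtype.ext (π.injective h)
  exact hmaps.exists_equiv_extend_of_card_eq (by simp) hinj

namespace FreeGroup

variable {α : Type*}

noncomputable def permOfFinset (S : Finset (FreeGroup α)) (a : α) : Perm S :=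
  (Perm.exists_perm_finset_apply_eq (Equiv.mulLeft (of a)) S).choose

variable {S : Finset (FreeGroup α)}

theorem permOfFinset_apply {a : α} {x : S} (h : of a * x ∈ S) :
    (permOfFinset S a x : FreeGroup α) = of a * x :=
  (Perm.exists_perm_finset_apply_eq (Equiv.mulLeft (of a)) S).choose_spec x h

theorem permOfFinset_inv_apply {a : α} {x : S} (h : (of a)⁻¹ * x ∈ S) :
    ((permOfFinset S a)⁻¹ x : FreeGroup α) = (of a)⁻¹ * x := by
  have key : permOfFinset S a ⟨_, h⟩ = x :=
    Subtype.ext <| (permOfFinset_apply (by simp)).trans (mul_inv_cancel_left _ _)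
  rw [Perm.inv_eq_iff_eq.mpr key.symm]

theorem lift_permOfFinset_mk_apply (L : List (α × Bool)) (hL : ∀ t, t <:+ L → mk t ∈ S) :
    (lift (permOfFinset S) (mk L) ⟨1, hL [] L.nil_suffix⟩ : FreeGroup α) = mk L := by
  induction L with
  | nil => rfl
  | cons x L ih =>
    have hL' : ∀ t, t <:+ L → mk t ∈ S := fun t ht => hL t (ht.trans (L.suffix_cons x))
    have hxL : mk (x :: L) = mk [x] * mk L := by rw [mul_mk]; rfl
    have hmem : mk [x] * mk L ∈ S := hxL ▸ hL _ List.suffix_rfl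
    have hstep : lift (permOfFinset S) (mk L) ⟨1, hL' [] L.nil_suffix⟩ =
        ⟨mk L, hL' L List.suffix_rfl⟩ :=
      Subtype.ext (ih hL')
    rw [hxL, _root_.map_mul, Perm.mul_apply, hstep]
    obtain ⟨a, _ | _⟩ := x
    · have hinv : mk [(a, false)] = (of a)⁻¹ := by simp [of, inv_mk, invRev]
      rw [hinv] at hmem ⊢
      rw [_root_.map_inv, lift_apply_of]
      exact permOfFinset_inv_apply hmem
    · exact permOfFinset_apply hmem

theorem residuallyFinite : ResiduallyFinite (FreeGroup α) := by
  classical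
  intro g hg
  let S : Finset (FreeGroup α) := (g.toWord.tails.map mk).toFinset
  have hS : ∀ t, t <:+ g.toWord → mk t ∈ S := fun t ht => by
    simpa [S] using ⟨t, ht, rfl⟩
  let φ := lift (permOfFinset S)
  refine ⟨φ.ker, φ.normal_ker, Subgroup.finiteIndex_ker φ, fun hker => hg ?_⟩
  have key := lift_permOfFinset_mk_apply g.toWord hS
  rwa [mk_toWord, φ.mem_ker.mp hker, Perm.one_apply, eq_comm] at key

end FreeGroup

/-- The free group on two generators is residually finite. -/
theorem freeGroup_two_residuallyFinite :
    ResiduallyFinite (FreeGroup (Fin 2)) :=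
  FreeGroup.residuallyFinite
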